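/- Let 0 < ε < 1 and k ≥ 1. Let M_k ∈ ℝ^{m×k} have full column rank and let M̄_k ∈ ℝ^{m×k} be a matrix identical to M_k except in a single column. Assume Ω ∈ ℝ^{d×m} is an ε-embedding of range(M_k) and also an ε-embedding of range(M̄_k). Let R₁₁, R̄₁₁ ∈ ℝ^{k×k} be the R factors of thin QR factorizations of M_k and M̄_k respectively, and let R₁₁^sk, R̄₁₁^sk ∈ ℝ^{k×k} be the R factors of thin QR factorizations of ΩM_k and ΩM̄_k respectively (so that |det R₁₁| = V(M_k) ≠ 0 and |det R₁₁^sk| = V(ΩM_k) ≠ 0). Then √((1−ε)/(1+ε)) · |det(R̄₁₁^sk)/det(R₁₁^sk)| ≤ |det(R̄₁₁)/det(R₁₁)| ≤ √((1+ε)/(1−ε)) · |det(R̄₁₁^sk)/det(R₁₁^sk)|. -/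

import Mathlib

open Matrix

/-- Euclidean (ℓ₂) norm of a vector in `ℝ^m`. -/
noncomputable def norm2 {m : ℕ} (x : Fin m → ℝ) : ℝ := Real.sqrt (x ⬝ᵥ x)

/-- `Ω` is an `ε`-embedding of the subspace `V ⊆ ℝ^m`:
`|⟨Ωx, Ωy⟩ − ⟨x, y⟩| ≤ ε‖x‖₂‖y‖₂` for all `x, y ∈ V`. -/
def IsEmbedding {d m : ℕ} (ε : ℝ) (Ω : Matrix (Fin d) (Fin m) ℝ)
    (V : Submodule ℝ (Fin m → ℝ)) : Prop :=
  ∀ x ∈ V, ∀ y ∈ V, |(Ω.mulVec x) ⬝ᵥ (Ω.mulVec y) - x ⬝ᵥ y| ≤ ε * norm2 x * norm2 y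

/-- The `i`-th largest singular value (`0`-indexed) of a real matrix `A`:
the square root of the `i`-th largest eigenvalue of `AᵀA`. -/
noncomputable def singularValues {m n : ℕ} (A : Matrix (Fin m) (Fin n) ℝ) (i : Fin n) : ℝ :=
  Real.sqrt ((show (Aᵀ * A).IsHermitian by
      simpa using Matrix.isHermitian_conjTranspose_mul_self A).eigenvalues
    (Tuple.sort (show (Aᵀ * A).IsHermitian by
      simpa using Matrix.isHermitian_conjTranspose_mul_self A).eigenvalues i.rev))

/-- `P` is a permutation matrix. -/
def IsPermMatrix {n : ℕ} (P : Matrix (Fin n) (Fin n) ℝ) : Prop :=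
  ∃ σ : Equiv.Perm (Fin n), P = σ.permMatrix ℝ

/-- `A = Q * [[R₁₁, R₁₂], [0, R₂₂]]` is a partial QR factorization with block size `k`,
where `A` is `(k+m') × (k+n')`, `Q` is orthogonal and `R₁₁` is `k × k` upper triangular. -/
def PartialQR {k m' n' : ℕ} (A : Matrix (Fin (k + m')) (Fin (k + n')) ℝ)
    (Q : Matrix (Fin (k + m')) (Fin (k + m')) ℝ)
    (R11 : Matrix (Fin k) (Fin k) ℝ) (R12 : Matrix (Fin k) (Fin n') ℝ)
    (R22 : Matrix (Fin m') (Fin n') ℝ) : Prop :=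
  Qᵀ * Q = 1 ∧ (∀ i j : Fin k, (j : ℕ) < (i : ℕ) → R11 i j = 0) ∧
    A = Q * (Matrix.reindex finSumFinEquiv finSumFinEquiv (Matrix.fromBlocks R11 R12 0 R22))

/-- `ω_i(A)`: the ℓ₂-norm of the `i`-th row of `A⁻¹`. -/
noncomputable def omega_ {k : ℕ} (A : Matrix (Fin k) (Fin k) ℝ) (i : Fin k) : ℝ :=
  norm2 (fun l => A⁻¹ i l)

/-- `γ_j(B)`: the ℓ₂-norm of the `j`-th column of `B`. -/
noncomputable def gamma_ {p q : ℕ} (B : Matrix (Fin p) (Fin q) ℝ) (j : Fin q) : ℝ :=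
  norm2 (fun l => B l j)

/-- `ρ(R, k)` for `R = [[R₁₁, R₁₂], [0, R₂₂]]`:
`max_{i,j} sqrt(((R₁₁⁻¹R₁₂)_{i,j})² + ω_i(R₁₁)²·γ_j(R₂₂)²)`. -/
noncomputable def rho {k m' n' : ℕ} (R11 : Matrix (Fin k) (Fin k) ℝ)
    (R12 : Matrix (Fin k) (Fin n') ℝ) (R22 : Matrix (Fin m') (Fin n') ℝ) : ℝ :=
  ⨆ i : Fin k, ⨆ j : Fin n',
    Real.sqrt (((R11⁻¹ * R12) i j) ^ 2 + (omega_ R11 i) ^ 2 * (gamma_ R22 j) ^ 2)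

/-- The volume of `A ∈ ℝ^{m×n}`: `V(A) = sqrt(det(AᵀA))`. -/
noncomputable def vol {m n : ℕ} (A : Matrix (Fin m) (Fin n) ℝ) : ℝ :=
  Real.sqrt (Matrix.det (Aᵀ * A))

/-- The angle between two vectors: `arccos(⟨u,w⟩/(‖u‖₂‖w‖₂))`. -/
noncomputable def angleVec {m : ℕ} (u w : Fin m → ℝ) : ℝ :=
  Real.arccos ((u ⬝ᵥ w) / (norm2 u * norm2 w))

/-- The angle between a vector and a subspace:
`arccos( max over nonzero u ∈ K of ⟨v,u⟩/(‖v‖₂‖u‖₂) )`. -/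
noncomputable def angleSub {m : ℕ} (v : Fin m → ℝ) (K : Submodule ℝ (Fin m → ℝ)) : ℝ :=
  Real.arccos (sSup {c : ℝ | ∃ u ∈ K, u ≠ 0 ∧ c = (v ⬝ᵥ u) / (norm2 v * norm2 u)})

/-- `P` is the orthogonal projector onto the subspace `K` (w.r.t. the dot product). -/
def IsOrthProj {m : ℕ} (K : Submodule ℝ (Fin m → ℝ))
    (P : (Fin m → ℝ) →ₗ[ℝ] (Fin m → ℝ)) : Prop :=
  (∀ v, P v ∈ K) ∧ (∀ u ∈ K, P u = u) ∧ (∀ v, ∀ u ∈ K, (v - P v) ⬝ᵥ u = 0)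

/-- Thin QR factorization `A = Q R` with `Q ∈ ℝ^{m×k}` having orthonormal columns and
`R ∈ ℝ^{k×k}` upper triangular. -/
def ThinQR {m k : ℕ} (A Q : Matrix (Fin m) (Fin k) ℝ) (R : Matrix (Fin k) (Fin k) ℝ) : Prop :=
  Qᵀ * Q = 1 ∧ (∀ a b : Fin k, (b : ℕ) < (a : ℕ) → R a b = 0) ∧ A = Q * R

/-- Frobenius norm of a real matrix. -/
noncomputable def frobNorm {p q : ℕ} (A : Matrix (Fin p) (Fin q) ℝ) : ℝ :=
  Real.sqrt (∑ i, ∑ j, A i j ^ 2)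

/-- Spectral norm of a real matrix: sup of `‖Ax‖₂` over the unit ball. -/
noncomputable def specNorm {p q : ℕ} (A : Matrix (Fin p) (Fin q) ℝ) : ℝ :=
  sSup {r : ℝ | ∃ x : Fin q → ℝ, norm2 x ≤ 1 ∧ r = norm2 (A.mulVec x)}

section Aux

open Matrix

lemma dot_self_nonneg' {m : ℕ} (v : Fin m → ℝ) : 0 ≤ v ⬝ᵥ v :=
  Finset.sum_nonneg fun _ _ => mul_self_nonneg _

lemma inner_eq_dot {m : ℕ} (u v : EuclideanSpace ℝ (Fin m)) :
    (inner ℝ u v : ℝ) = (u : Fin m → ℝ) ⬝ᵥ (v : Fin m → ℝ) := by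
  simp [PiLp.inner_apply, RCLike.inner_apply, dotProduct, mul_comm]

/-- Orthogonal decomposition of `x` against the columns of `A` other than column `i`. -/
lemma exists_decomp {m n : ℕ} (A : Matrix (Fin m) (Fin n) ℝ) (i : Fin n) (x : Fin m → ℝ) :
    ∃ (y : Fin n → ℝ) (r : Fin m → ℝ), y i = 0 ∧ x = A.mulVec y + r ∧
      (∀ j : Fin n, j ≠ i → (fun l => A l j) ⬝ᵥ r = 0) ∧
      (∀ y' : Fin n → ℝ, y' i = 0 →
        r ⬝ᵥ r ≤ (x - A.mulVec y') ⬝ᵥ (x - A.mulVec y')) := by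
  classical
  set f : Fin n → EuclideanSpace ℝ (Fin m) :=
    fun j => if j = i then 0 else WithLp.toLp 2 (fun l => A l j) with hf
  set K : Submodule ℝ (EuclideanSpace ℝ (Fin m)) := Submodule.span ℝ (Set.range f) with hK
  -- key : A *ᵥ z = ∑ j, z j • f j when z i = 0
  have key : ∀ z : Fin n → ℝ, z i = 0 →
      A.mulVec z = ((∑ j, z j • f j : EuclideanSpace ℝ (Fin m)) : Fin m → ℝ) := by
    intro z hz
    funext l
    have h1 : ((∑ j, z j • f j : EuclideanSpace ℝ (Fin m)) : Fin m → ℝ) l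
        = ∑ j, z j * (f j : Fin m → ℝ) l := by
      have h0 : ((∑ j, z j • f j : EuclideanSpace ℝ (Fin m)) : Fin m → ℝ) l
          = ∑ j, (z j • f j : EuclideanSpace ℝ (Fin m)) l :=
        by rw [WithLp.ofLp_sum]; exact Finset.sum_apply l Finset.univ _
      rw [h0]; rfl
    rw [h1]
    simp only [Matrix.mulVec, dotProduct]
    refine Finset.sum_congr rfl fun j _ => ?_
    by_cases hj : j = i
    · subst hj; simp [hz, hf]
    · simp [hf, hj, mul_comm]
  have hmemK : ∀ z : Fin n → ℝ, z i = 0 →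
      (WithLp.toLp 2 (A.mulVec z) : EuclideanSpace ℝ (Fin m)) ∈ K := by
    intro z hz
    rw [key z hz, WithLp.toLp_ofLp]
    exact Submodule.sum_mem _ fun j _ =>
      Submodule.smul_mem _ _ (Submodule.subset_span (Set.mem_range_self j))
  set xE : EuclideanSpace ℝ (Fin m) := WithLp.toLp 2 x with hxE
  have hpK : (K.orthogonalProjectionOnto xE : EuclideanSpace ℝ (Fin m)) ∈ K := Submodule.coe_mem _
  obtain ⟨c, hc⟩ := (Submodule.mem_span_range_iff_exists_fun ℝ).mp hpK
  set y : Fin n → ℝ := fun j => if j = i then 0 else c j with hy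
  have hyi : y i = 0 := by simp [hy]
  have hAy : (A.mulVec y : Fin m → ℝ)
      = ((K.orthogonalProjectionOnto xE : EuclideanSpace ℝ (Fin m)) : Fin m → ℝ) := by
    rw [key y hyi, ← hc]
    congr 1
    refine Finset.sum_congr rfl fun j _ => ?_
    by_cases hj : j = i
    · simp [hy, hj, hf]
    · simp [hy, hj]
  set r : Fin m → ℝ := x - A.mulVec y with hr
  have hxr : x = A.mulVec y + r := by rw [hr]; ring
  have hrK : (WithLp.toLp 2 r : EuclideanSpace ℝ (Fin m)) ∈ Kᗮ := by
    have h := Submodule.sub_starProjection_mem_orthogonal (K := K) xE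
    rw [Submodule.starProjection_apply] at h
    rw [hr, hAy]
    exact h
  have hperpK : ∀ v : EuclideanSpace ℝ (Fin m), v ∈ K → (v : Fin m → ℝ) ⬝ᵥ r = 0 := by
    intro v hv
    exact (inner_eq_dot v (WithLp.toLp 2 r)).symm.trans ((Submodule.mem_orthogonal K _).mp hrK v hv)
  refine ⟨y, r, hyi, hxr, ?_, ?_⟩
  · intro j hj
    have hfj : f j = WithLp.toLp 2 (fun l : Fin m => A l j) := by simp [hf, hj]
    have : (f j : EuclideanSpace ℝ (Fin m)) ∈ K :=
      Submodule.subset_span (Set.mem_range_self j)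
    have := hperpK _ this
    rwa [hfj] at this
  · intro y' hy'
    set s : Fin m → ℝ := A.mulVec y - A.mulVec y' with hs
    have hsK : (WithLp.toLp 2 s : EuclideanSpace ℝ (Fin m)) ∈ K := by
      have : s = A.mulVec (y - y') := by rw [hs, Matrix.mulVec_sub]
      rw [this]
      exact hmemK _ (by simp [Pi.sub_apply, hyi, hy'])
    have hsr : s ⬝ᵥ r = 0 := hperpK _ hsK
    have hrs : r ⬝ᵥ s = 0 := by rw [dotProduct_comm]; exact hsr
    have hsplit : x - A.mulVec y' = r + s := by rw [hr, hs]; ring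
    rw [hsplit, add_dotProduct, dotProduct_add, dotProduct_add, hrs, hsr]
    have := dot_self_nonneg' s
    linarith

/-- Determinant of the Gram matrix after replacing column `i` by `x`,
where `x = A y + r` with `y i = 0` and `r` orthogonal to the other columns. -/
lemma gram_det_update {m n : ℕ} (A : Matrix (Fin m) (Fin (n + 1)) ℝ) (i : Fin (n + 1))
    (x : Fin m → ℝ) (y : Fin (n + 1) → ℝ) (r : Fin m → ℝ) (hyi : y i = 0)
    (hx : x = A.mulVec y + r)
    (hr : ∀ j : Fin (n + 1), j ≠ i → (fun l => A l j) ⬝ᵥ r = 0) :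
    ((A.updateCol i x)ᵀ * (A.updateCol i x)).det
      = (r ⬝ᵥ r) * ((Aᵀ * A).submatrix i.succAbove i.succAbove).det := by
  classical
  set N := A.updateCol i x with hN
  set N' := A.updateCol i r with hN'
  set v : Fin (n + 1) → ℝ := Pi.single i (1 : ℝ) - y with hv
  set E : Matrix (Fin (n + 1)) (Fin (n + 1)) ℝ :=
    (1 : Matrix (Fin (n + 1)) (Fin (n + 1)) ℝ).updateCol i v with hE
  have hNy : N.mulVec y = A.mulVec y := by
    funext l
    simp only [Matrix.mulVec, dotProduct]
    refine Finset.sum_congr rfl fun j _ => ?_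
    by_cases hj : j = i
    · subst hj; simp [hyi]
    · rw [hN, Matrix.updateCol_ne hj]
  have hNE : N * E = N' := by
    ext l j
    by_cases hj : j = i
    · rw [hj]
      have h1 : (N * E) l i = ∑ b, N l b * v b := by
        simp [Matrix.mul_apply, hE, Matrix.updateCol_self]
      have h2 : ∑ b, N l b * v b
          = (∑ b, N l b * (Pi.single i 1 : Fin (n + 1) → ℝ) b) - ∑ b, N l b * y b := by
        rw [← Finset.sum_sub_distrib]
        exact Finset.sum_congr rfl fun b _ => by rw [hv, Pi.sub_apply, mul_sub]
      have h3 : (∑ b, N l b * (Pi.single i 1 : Fin (n + 1) → ℝ) b) = N l i := by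
        rw [Finset.sum_eq_single i]
        · simp
        · intro b _ hb; simp [Pi.single_eq_of_ne hb]
        · intro h; exact absurd (Finset.mem_univ i) h
      have h4 : ∑ b, N l b * y b = (A.mulVec y) l := by
        rw [← hNy]; rfl
      have h5 : N l i = x l := by rw [hN, Matrix.updateCol_self]
      have h6 : x l = (A.mulVec y) l + r l := by rw [hx]; rfl
      have h7 : N' l i = r l := by rw [hN', Matrix.updateCol_self]
      rw [h1, h2, h3, h4, h5, h7]
      linarith
    · have h1 : (N * E) l j = ∑ b, N l b * (1 : Matrix (Fin (n + 1)) (Fin (n + 1)) ℝ) b j := by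
        simp only [Matrix.mul_apply, hE]
        exact Finset.sum_congr rfl fun b _ => by rw [Matrix.updateCol_ne hj]
      have h2 : ∑ b, N l b * (1 : Matrix (Fin (n + 1)) (Fin (n + 1)) ℝ) b j = N l j := by
        rw [← Matrix.mul_apply, Matrix.mul_one]
      have h3 : N' l j = N l j := by
        rw [hN', Matrix.updateCol_ne hj, hN, Matrix.updateCol_ne hj]
      rw [h1, h2, h3]
  have hdetE : E.det = 1 := by
    have h := Matrix.cramer_apply (1 : Matrix (Fin (n + 1)) (Fin (n + 1)) ℝ) v i
    rw [Matrix.cramer_one] at h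
    have hv1 : v i = 1 := by simp [hv, hyi]
    rw [hE, ← h]
    simpa using hv1
  have hGram : (N'ᵀ * N').det = (Nᵀ * N).det := by
    rw [← hNE]
    have : (N * E)ᵀ * (N * E) = Eᵀ * (Nᵀ * N) * E := by
      rw [Matrix.transpose_mul]
      simp [Matrix.mul_assoc]
    rw [this, Matrix.det_mul, Matrix.det_mul, Matrix.det_transpose, hdetE]
    ring
  have hNN : (Nᵀ * N).det = ((A.updateCol i x)ᵀ * (A.updateCol i x)).det := by rw [hN]
  have hcolN' : ∀ j : Fin (n + 1), j ≠ i → (fun l => N' l j) = fun l => A l j := by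
    intro j hj
    funext l
    rw [hN', Matrix.updateCol_ne hj]
  have hcolN'i : (fun l => N' l i) = r := by
    funext l
    rw [hN', Matrix.updateCol_self]
  have hentry : ∀ a b : Fin (n + 1), (N'ᵀ * N') a b = (fun l => N' l a) ⬝ᵥ (fun l => N' l b) := by
    intro a b
    simp [Matrix.mul_apply, Matrix.transpose_apply, dotProduct]
  have hexp : (N'ᵀ * N').det
      = (r ⬝ᵥ r) * (((N'ᵀ * N')).submatrix i.succAbove i.succAbove).det := by
    rw [Matrix.det_succ_column (N'ᵀ * N') i]
    rw [Finset.sum_eq_single i]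
    · have h0 : (N'ᵀ * N') i i = r ⬝ᵥ r := by rw [hentry, hcolN'i]
      have h1 : ((-1 : ℝ)) ^ ((i : ℕ) + (i : ℕ)) = 1 := by
        rw [show (i : ℕ) + (i : ℕ) = 2 * (i : ℕ) by ring, pow_mul]
        norm_num
      rw [h0, h1, one_mul]
    · intro j _ hj
      have h0 : (N'ᵀ * N') j i = 0 := by
        rw [hentry, hcolN' j hj, hcolN'i]
        exact hr j hj
      rw [h0, mul_zero, zero_mul]
    · intro h; exact absurd (Finset.mem_univ i) h
  have hminor : ((N'ᵀ * N')).submatrix i.succAbove i.succAbove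
      = (Aᵀ * A).submatrix i.succAbove i.succAbove := by
    ext a b
    simp only [Matrix.submatrix_apply]
    rw [hentry]
    rw [hcolN' _ (Fin.succAbove_ne i a), hcolN' _ (Fin.succAbove_ne i b)]
    simp [Matrix.mul_apply, Matrix.transpose_apply, dotProduct]
  rw [← hNN, ← hGram, hexp, hminor]

lemma emb_bounds {d m : ℕ} {ε : ℝ} (Ω : Matrix (Fin d) (Fin m) ℝ)
    (V : Submodule ℝ (Fin m → ℝ)) (h : IsEmbedding ε Ω V) {x : Fin m → ℝ} (hx : x ∈ V) :
    (1 - ε) * (x ⬝ᵥ x) ≤ (Ω.mulVec x) ⬝ᵥ (Ω.mulVec x) ∧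
      (Ω.mulVec x) ⬝ᵥ (Ω.mulVec x) ≤ (1 + ε) * (x ⬝ᵥ x) := by
  have h2 := h x hx x hx
  have hxx : norm2 x * norm2 x = x ⬝ᵥ x := Real.mul_self_sqrt (dot_self_nonneg' x)
  rw [abs_le] at h2
  have hrw : ε * norm2 x * norm2 x = ε * (x ⬝ᵥ x) := by rw [mul_assoc, hxx]
  constructor <;> nlinarith [h2.1, h2.2]

lemma thinQR_gram_det {p q : ℕ} {A Q : Matrix (Fin p) (Fin q) ℝ} {R : Matrix (Fin q) (Fin q) ℝ}
    (h : ThinQR A Q R) : (Aᵀ * A).det = R.det ^ 2 := by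
  obtain ⟨hQ, -, rfl⟩ := h
  have : (Q * R)ᵀ * (Q * R) = Rᵀ * R := by
    rw [Matrix.transpose_mul, Matrix.mul_assoc, ← Matrix.mul_assoc Qᵀ, hQ, Matrix.one_mul]
  rw [this, Matrix.det_mul, Matrix.det_transpose, sq]

end Aux

set_option maxHeartbeats 2000000 in
/-- the ratio of the determinants of the R factors of two matrices differing in
a single column is preserved by sketching, up to `√((1±ε)/(1∓ε))`. -/
theorem stmt_10 {d m k : ℕ} (ε : ℝ) (hε0 : 0 < ε) (hε1 : ε < 1) (hk : 1 ≤ k)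
    (Mk : Matrix (Fin m) (Fin k) ℝ)
    (hrank : LinearIndependent ℝ (fun j : Fin k => fun r => Mk r j))
    (i : Fin k) (w : Fin m → ℝ)
    (Ω : Matrix (Fin d) (Fin m) ℝ)
    (hΩ1 : IsEmbedding ε Ω (LinearMap.range Mk.mulVecLin))
    (hΩ2 : IsEmbedding ε Ω (LinearMap.range (Mk.updateCol i w).mulVecLin))
    (Q1 Q2 : Matrix (Fin m) (Fin k) ℝ) (Q3 Q4 : Matrix (Fin d) (Fin k) ℝ)
    (R11 Rbar Rsk Rbarsk : Matrix (Fin k) (Fin k) ℝ)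
    (h1 : ThinQR Mk Q1 R11) (h2 : ThinQR (Mk.updateCol i w) Q2 Rbar)
    (h3 : ThinQR (Ω * Mk) Q3 Rsk) (h4 : ThinQR (Ω * Mk.updateCol i w) Q4 Rbarsk) :
    Real.sqrt ((1 - ε) / (1 + ε)) * |Rbarsk.det / Rsk.det| ≤ |Rbar.det / R11.det| ∧
    |Rbar.det / R11.det| ≤ Real.sqrt ((1 + ε) / (1 - ε)) * |Rbarsk.det / Rsk.det| := by
  classical
  obtain ⟨n, rfl⟩ : ∃ n, k = n + 1 := ⟨k - 1, by omega⟩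
  -- abbreviations
  set Mb := Mk.updateCol i w with hMb
  set colMi : Fin m → ℝ := fun l => Mk l i with hcolMi
  set S := Ω * Mk with hS
  -- column of S
  have hScol : (fun l => S l i) = Ω.mulVec colMi := by
    funext l
    simp [hS, Matrix.mul_apply, Matrix.mulVec, dotProduct, hcolMi]
  have hSMb : Ω * Mb = S.updateCol i (Ω.mulVec w) := by
    ext l j
    by_cases hj : j = i
    · subst hj
      simp [hS, hMb, Matrix.mul_apply, Matrix.updateCol_self, Matrix.mulVec, dotProduct]
    · simp [hS, hMb, Matrix.mul_apply, Matrix.updateCol_ne hj]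
  have hSmul : ∀ z : Fin (n + 1) → ℝ, S.mulVec z = Ω.mulVec (Mk.mulVec z) := by
    intro z; rw [hS, ← Matrix.mulVec_mulVec]
  -- decompositions
  obtain ⟨ya, ra, hya, hxa, hpa, hmina⟩ := exists_decomp Mk i colMi
  obtain ⟨yb, rb, hyb, hxb, hpb, hminb⟩ := exists_decomp Mk i w
  obtain ⟨ya', ra', hya', hxa', hpa', hmina'⟩ := exists_decomp S i (Ω.mulVec colMi)
  obtain ⟨yb', rb', hyb', hxb', hpb', hminb'⟩ := exists_decomp S i (Ω.mulVec w)
  set a := ra ⬝ᵥ ra with hadef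
  set b := rb ⬝ᵥ rb with hbdef
  set a' := ra' ⬝ᵥ ra' with ha'def
  set b' := rb' ⬝ᵥ rb' with hb'def
  set D := ((Mkᵀ * Mk).submatrix i.succAbove i.succAbove).det with hD
  set D' := ((Sᵀ * S).submatrix i.succAbove i.succAbove).det with hD'
  -- Gram determinant identities
  have hGa : (Mkᵀ * Mk).det = a * D := by
    have h := gram_det_update Mk i colMi ya ra hya hxa hpa
    rwa [show Mk.updateCol i colMi = Mk from Matrix.updateCol_eq_self Mk i] at h
  have hGb : (Mbᵀ * Mb).det = b * D := gram_det_update Mk i w yb rb hyb hxb hpb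
  have hGa' : (Sᵀ * S).det = a' * D' := by
    have h := gram_det_update S i (Ω.mulVec colMi) ya' ra' hya' hxa' hpa'
    rwa [show S.updateCol i (Ω.mulVec colMi) = S by
      rw [← hScol]; exact Matrix.updateCol_eq_self S i] at h
  have hGb' : ((Ω * Mb)ᵀ * (Ω * Mb)).det = b' * D' := by
    rw [hSMb]
    exact gram_det_update S i (Ω.mulVec w) yb' rb' hyb' hxb' hpb'
  -- memberships
  have hcolRange : colMi ∈ LinearMap.range Mk.mulVecLin := by
    refine ⟨Pi.single i 1, ?_⟩
    funext l
    simp [Matrix.mulVecLin_apply, hcolMi]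
  have hwRange : w ∈ LinearMap.range Mb.mulVecLin := by
    refine ⟨Pi.single i 1, ?_⟩
    funext l
    simp [Matrix.mulVecLin_apply, hMb, Matrix.updateCol_self]
  have hmulEq : ∀ z : Fin (n + 1) → ℝ, z i = 0 → Mk.mulVec z = Mb.mulVec z := by
    intro z hz
    funext l
    simp only [Matrix.mulVec, dotProduct]
    refine Finset.sum_congr rfl fun j _ => ?_
    by_cases hj : j = i
    · subst hj; simp [hz]
    · rw [hMb, Matrix.updateCol_ne hj]
  have hmulRange1 : ∀ z : Fin (n + 1) → ℝ, Mk.mulVec z ∈ LinearMap.range Mk.mulVecLin :=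
    fun z => ⟨z, rfl⟩
  have hmulRange2 : ∀ z : Fin (n + 1) → ℝ, z i = 0 →
      Mk.mulVec z ∈ LinearMap.range Mb.mulVecLin := by
    intro z hz
    exact ⟨z, (hmulEq z hz).symm⟩
  -- nonnegativity
  have ha0 : 0 ≤ a := dot_self_nonneg' ra
  have hb0 : 0 ≤ b := dot_self_nonneg' rb
  have ha'0 : 0 ≤ a' := dot_self_nonneg' ra'
  have hb'0 : 0 ≤ b' := dot_self_nonneg' rb'
  have hε1' : (0 : ℝ) < 1 - ε := by linarith
  have hε1'' : (0 : ℝ) < 1 + ε := by linarith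
  -- distance comparisons for a
  have hraMem : ra ∈ LinearMap.range Mk.mulVecLin := by
    have : ra = colMi - Mk.mulVec ya := by rw [hxa]; ring
    rw [this]
    exact sub_mem hcolRange (hmulRange1 ya)
  have ha'2 : a' ≤ (1 + ε) * a := by
    have h1 : a' ≤ (Ω.mulVec colMi - S.mulVec ya) ⬝ᵥ (Ω.mulVec colMi - S.mulVec ya) :=
      hmina' ya hya
    have h2 : Ω.mulVec colMi - S.mulVec ya = Ω.mulVec ra := by
      rw [hSmul, ← Matrix.mulVec_sub]
      congr 1
      rw [hxa]; ring
    rw [h2] at h1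
    have h3 := (emb_bounds Ω _ hΩ1 hraMem).2
    calc a' ≤ (Ω.mulVec ra) ⬝ᵥ (Ω.mulVec ra) := h1
      _ ≤ (1 + ε) * a := h3
  have ha'1 : (1 - ε) * a ≤ a' := by
    have h1 : a ≤ (colMi - Mk.mulVec ya') ⬝ᵥ (colMi - Mk.mulVec ya') := hmina ya' hya'
    have hmem : colMi - Mk.mulVec ya' ∈ LinearMap.range Mk.mulVecLin :=
      sub_mem hcolRange (hmulRange1 ya')
    have h2 := (emb_bounds Ω _ hΩ1 hmem).1
    have h3 : Ω.mulVec (colMi - Mk.mulVec ya') = ra' := by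
      rw [Matrix.mulVec_sub, ← hSmul, hxa']; ring
    rw [h3] at h2
    nlinarith [h1, h2]
  -- distance comparisons for b
  have hrbMem : rb ∈ LinearMap.range Mb.mulVecLin := by
    have : rb = w - Mk.mulVec yb := by rw [hxb]; ring
    rw [this]
    exact sub_mem hwRange (hmulRange2 yb hyb)
  have hb'2 : b' ≤ (1 + ε) * b := by
    have h1 : b' ≤ (Ω.mulVec w - S.mulVec yb) ⬝ᵥ (Ω.mulVec w - S.mulVec yb) := hminb' yb hyb
    have h2 : Ω.mulVec w - S.mulVec yb = Ω.mulVec rb := by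
      rw [hSmul, ← Matrix.mulVec_sub]
      congr 1
      rw [hxb]; ring
    rw [h2] at h1
    have h3 := (emb_bounds Ω _ hΩ2 hrbMem).2
    calc b' ≤ (Ω.mulVec rb) ⬝ᵥ (Ω.mulVec rb) := h1
      _ ≤ (1 + ε) * b := h3
  have hb'1 : (1 - ε) * b ≤ b' := by
    have h1 : b ≤ (w - Mk.mulVec yb') ⬝ᵥ (w - Mk.mulVec yb') := hminb yb' hyb'
    have hmem : w - Mk.mulVec yb' ∈ LinearMap.range Mb.mulVecLin :=
      sub_mem hwRange (hmulRange2 yb' hyb')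
    have h2 := (emb_bounds Ω _ hΩ2 hmem).1
    have h3 : Ω.mulVec (w - Mk.mulVec yb') = rb' := by
      rw [Matrix.mulVec_sub, ← hSmul, hxb']; ring
    rw [h3] at h2
    nlinarith [h1, h2]
  -- positivity of Gram determinants
  have hMVinj : ∀ v : Fin (n + 1) → ℝ, v ≠ 0 → Mk.mulVec v ≠ 0 := by
    intro v hv hcon
    apply hv
    have hli := Fintype.linearIndependent_iff.mp hrank
    have hsum : (∑ j, v j • (fun l => Mk l j)) = (0 : Fin m → ℝ) := by
      funext l
      rw [show (∑ j, v j • (fun l => Mk l j)) l = ∑ j, v j * Mk l j by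
        rw [Finset.sum_apply]; rfl]
      have := congrFun hcon l
      simp only [Matrix.mulVec, dotProduct] at this
      rw [← this]
      exact Finset.sum_congr rfl fun j _ => mul_comm _ _
    funext j
    exact hli v hsum j
  have hdotpos : ∀ {p : ℕ} (v : Fin p → ℝ), v ≠ 0 → 0 < v ⬝ᵥ v := by
    intro p v hv
    rcases lt_or_eq_of_le (dot_self_nonneg' v) with h | h
    · exact h
    · exact absurd (dotProduct_self_eq_zero.mp h.symm) hv
  have hGpos : 0 < (Mkᵀ * Mk).det := by
    apply Matrix.PosDef.det_pos
    refine Matrix.posDef_iff_dotProduct_mulVec.mpr ⟨by simpa using Matrix.isHermitian_conjTranspose_mul_self Mk, fun v hv => ?_⟩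
    have h1 : star v ⬝ᵥ ((Mkᵀ * Mk) *ᵥ v) = (Mk.mulVec v) ⬝ᵥ (Mk.mulVec v) := by
      rw [show star v = v from rfl, ← Matrix.mulVec_mulVec,
        dotProduct_mulVec, Matrix.vecMul_transpose]
    rw [h1]
    exact hdotpos _ (hMVinj v hv)
  have hSVinj : ∀ v : Fin (n + 1) → ℝ, v ≠ 0 → S.mulVec v ≠ 0 := by
    intro v hv hcon
    have hmem : Mk.mulVec v ∈ LinearMap.range Mk.mulVecLin := ⟨v, rfl⟩
    have h2 := (emb_bounds Ω _ hΩ1 hmem).1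
    rw [← hSmul, hcon] at h2
    have h3 := hdotpos _ (hMVinj v hv)
    simp only [zero_dotProduct, dotProduct_zero] at h2
    nlinarith
  have hGspos : 0 < (Sᵀ * S).det := by
    apply Matrix.PosDef.det_pos
    refine Matrix.posDef_iff_dotProduct_mulVec.mpr ⟨by simpa using Matrix.isHermitian_conjTranspose_mul_self S, fun v hv => ?_⟩
    have h1 : star v ⬝ᵥ ((Sᵀ * S) *ᵥ v) = (S.mulVec v) ⬝ᵥ (S.mulVec v) := by
      rw [show star v = v from rfl, ← Matrix.mulVec_mulVec,
        dotProduct_mulVec, Matrix.vecMul_transpose]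
    rw [h1]
    exact hdotpos _ (hSVinj v hv)
  -- positivity of a, D, a', D'
  have haD : 0 < a * D := hGa ▸ hGpos
  have haPos : 0 < a := by
    rcases mul_pos_iff.mp haD with ⟨h1, _⟩ | ⟨h1, _⟩
    · exact h1
    · linarith
  have hDPos : 0 < D := by
    rcases mul_pos_iff.mp haD with ⟨_, h1⟩ | ⟨h1, _⟩
    · exact h1
    · linarith
  have haD' : 0 < a' * D' := hGa' ▸ hGspos
  have ha'Pos : 0 < a' := by
    rcases mul_pos_iff.mp haD' with ⟨h1, _⟩ | ⟨h1, _⟩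
    · exact h1
    · linarith
  have hD'Pos : 0 < D' := by
    rcases mul_pos_iff.mp haD' with ⟨_, h1⟩ | ⟨h1, _⟩
    · exact h1
    · linarith
  -- determinant identities from QR
  have hp2 : R11.det ^ 2 = a * D := by rw [← thinQR_gram_det h1]; exact hGa
  have hpb2 : Rbar.det ^ 2 = b * D := by rw [← thinQR_gram_det h2]; exact hGb
  have hq2 : Rsk.det ^ 2 = a' * D' := by rw [← thinQR_gram_det h3]; exact hGa'
  have hqb2 : Rbarsk.det ^ 2 = b' * D' := by rw [← thinQR_gram_det h4]; exact hGb'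
  -- express the absolute ratios as square roots
  have e1 : |Rbar.det / R11.det| = Real.sqrt (b / a) := by
    rw [← Real.sqrt_sq_eq_abs, div_pow, hpb2, hp2, mul_div_mul_right _ _ hDPos.ne']
  have e2 : |Rbarsk.det / Rsk.det| = Real.sqrt (b' / a') := by
    rw [← Real.sqrt_sq_eq_abs, div_pow, hqb2, hq2, mul_div_mul_right _ _ hD'Pos.ne']
  rw [e1, e2]
  have hq1 : (0 : ℝ) ≤ (1 - ε) / (1 + ε) := by positivity
  have hq2' : (0 : ℝ) ≤ (1 + ε) / (1 - ε) := by positivity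
  constructor
  · rw [← Real.sqrt_mul hq1]
    apply Real.sqrt_le_sqrt
    rw [div_mul_div_comm, div_le_div_iff₀ (by positivity) haPos]
    nlinarith [mul_le_mul_of_nonneg_right hb'2 haPos.le,
      mul_le_mul_of_nonneg_left ha'1 (mul_nonneg hε1''.le hb0)]
  · rw [← Real.sqrt_mul hq2']
    apply Real.sqrt_le_sqrt
    rw [div_mul_div_comm, div_le_div_iff₀ haPos (by positivity)]
    nlinarith [mul_le_mul_of_nonneg_right hb'1 ha'Pos.le,
      mul_le_mul_of_nonneg_left ha'2 (mul_nonneg hε1''.le hb'0)]
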